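/- Let i be in {1,...,n}, let lambda0 be in Pi_l, let nu in a_Z* satisfy <nu+rho, alpha_i^v> <= 0, and set lambda = s_i∘(lambda0 + l*nu). Then <lambda+rho, alpha_i^v> = l*(-<nu+rho, alpha_i^v>) + (l - 1 - <lambda0, alpha_i^v>), and lambda^{(1)} (relative to i) equals lambda0 + l*(s_i∘nu). (Key computation in step (b) of the proof of Theorem 1.2) -/

import Mathlib

open Finsupp LaurentPolynomial

noncomputable section

/-- The ring `K = ℤ[t^{1/2}, t^{-1/2}]`: Laurent polynomials over `ℤ` in the
variable `T = t^{1/2}`. -/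
abbrev K : Type := LaurentPolynomial ℤ

/-- The element `t^{1/2}` of `K`. -/
def tHalf : K := T 1

/-- The bar involution of `K`, determined by `t^{1/2} ↦ t^{-1/2}`. -/
def conjK : K →+* K := (LaurentPolynomial.invert (R := ℤ)).toRingHom

/-- `V`: the free `K`-module with basis `{|λ⟩ : λ ∈ a_ℤ^*}` indexed by the weight
lattice `Λ`. -/
abbrev V (Λ : Type) : Type := Λ →₀ K

/-- The basis element `|λ⟩` of `V`. -/
def ket {Λ : Type} (lam : Λ) : V Λ := Finsupp.single lam 1

/-- The data of (the weight lattice of) a reduced finite crystallographic root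
system: the weight lattice `Λ = a_ℤ^*`, the (finite) Weyl group `W = W₀` acting
on `Λ` through `σ`, the simple reflections `s i`, the simple roots `α i`, the
pairings `pair i = ⟨·, α_i^∨⟩` with the simple coroots, the finite set
`posRoots` of pairings `⟨·, α^∨⟩` with the coroots `α^∨` of the positive roots
`α ∈ R⁺`, the half-sum `ρ` of the positive roots (assumed to lie in `Λ`), the
longest element `w0` (of length `posRoots.card`), and the sign character `det`. -/
structure RootData (Λ W : Type) [AddCommGroup Λ] [Group W] [Fintype W] where
  n : ℕ
  σ : W →* Multiplicative (AddAut Λ)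
  s : Fin n → W
  α : Fin n → Λ
  pair : Fin n → Λ →+ ℤ
  posRoots : Finset (Λ →+ ℤ)
  ρ : Λ
  w0 : W
  det : W →* ℤˣ
  /-- `s i` acts on `Λ` as the reflection in the simple root `α i`. -/
  reflect : ∀ (i : Fin n) (lam : Λ), Multiplicative.toAdd (σ (s i)) lam = lam - pair i lam • α i
  /-- crystallographic normalization `⟨α_i, α_i^∨⟩ = 2`. -/
  pair_alpha_self : ∀ i : Fin n, pair i (α i) = 2
  /-- the simple reflections are involutions. -/
  s_sq : ∀ i : Fin n, s i * s i = 1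
  /-- `W₀` is generated by the simple reflections. -/
  gen_s : Subgroup.closure (Set.range s) = ⊤
  /-- `⟨ρ, α_i^∨⟩ = 1` for every simple coroot. -/
  pair_rho : ∀ i : Fin n, pair i ρ = 1
  /-- each simple coroot is the coroot of a positive root. -/
  pair_mem : ∀ i : Fin n, pair i ∈ posRoots
  /-- the Weyl group permutes the (co)roots up to sign. -/
  roots_perm : ∀ (w : W), ∀ f ∈ posRoots,
    (∃ g ∈ posRoots, ∀ lam, f (Multiplicative.toAdd (σ w) lam) = g lam) ∨
    (∃ g ∈ posRoots, ∀ lam, f (Multiplicative.toAdd (σ w) lam) = - g lam)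
  /-- `w0` sends every positive root to a negative root (so `w0` is the longest
  element, of length `posRoots.card`). -/
  w0_neg : ∀ f ∈ posRoots, ∃ g ∈ posRoots, ∀ lam, f (Multiplicative.toAdd (σ w0) lam) = - g lam
  /-- `det` is the sign character. -/
  det_s : ∀ i : Fin n, det (s i) = -1

namespace RootData

variable {Λ W : Type} [AddCommGroup Λ] [Group W] [Fintype W]

/-- The dot action `w ∘ λ = w(λ + ρ) - ρ`. -/
def dot (D : RootData Λ W) (w : W) (lam : Λ) : Λ := Multiplicative.toAdd (D.σ w) (lam + D.ρ) - D.ρ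

/-- `λ^{(1)} = λ - j • α_i`, where `⟨λ + ρ, α_i^∨⟩ = k l + j` with `j ∈ {0, …, l-1}`
(relative to the index `i`). -/
def lamOne (D : RootData Λ W) (l : ℕ) (i : Fin D.n) (lam : Λ) : Λ :=
  lam - (D.pair i (lam + D.ρ) % (l : ℤ)) • D.α i

/-- A weight `λ` is dominant when `⟨λ + ρ, α_i^∨⟩ > 0` for all `i`. -/
def dominant (D : RootData Λ W) (lam : Λ) : Prop :=
  ∀ i : Fin D.n, 0 < D.pair i (lam + D.ρ)

/-- `λ₀ ∈ Π_l`: an `l`-restricted dominant weight. -/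
def restricted (D : RootData Λ W) (l : ℕ) (lam : Λ) : Prop :=
  D.dominant lam ∧ ∀ i : Fin D.n, D.pair i lam ≤ (l : ℤ) - 1

/-- The `K`-submodule `I` of `V` spanned by the straightening elements
(a), (b), (c). -/
def Idl (D : RootData Λ W) (l : ℕ) : Submodule K (V Λ) :=
  Submodule.span K
    ({x | ∃ (i : Fin D.n) (lam : Λ),
        (∃ k : ℤ, 0 ≤ k ∧ D.pair i (lam + D.ρ) = k * l) ∧
        x = ket (D.dot (D.s i) lam) + ket lam} ∪
     {x | ∃ (i : Fin D.n) (lam : Λ),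
        0 < D.pair i (lam + D.ρ) ∧ D.pair i (lam + D.ρ) < (l : ℤ) ∧
        x = ket (D.dot (D.s i) lam) + tHalf • ket lam} ∪
     {x | ∃ (i : Fin D.n) (lam : Λ),
        (l : ℤ) < D.pair i (lam + D.ρ) ∧ ¬ ((l : ℤ) ∣ D.pair i (lam + D.ρ)) ∧
        x = ket (D.dot (D.s i) lam) + tHalf • ket (D.dot (D.s i) (D.lamOne l i lam)) +
            ket (D.lamOne l i lam) + tHalf • ket lam})

/-- The operator `X^μ · : V → V` of the level `-(l+h)` action:
`X^μ · |γ⟩ = |γ - l w0(μ)⟩`. -/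
def opX (D : RootData Λ W) (l : ℕ) (mu : Λ) : V Λ →ₗ[K] V Λ :=
  Finsupp.lmapDomain K K (fun gam => gam - l • Multiplicative.toAdd (D.σ D.w0) mu)

/-- The level `-(l+h)` action of an element `g` of the group algebra `K[X]`
(with `K`-coefficients) on `V`. -/
def actKX (D : RootData Λ W) (l : ℕ) (g : Λ →₀ K) (v : V Λ) : V Λ :=
  g.sum fun mu c => c • (D.opX l mu v)

/-- The level `-(l+h)` action of an element `g` of `ℤ[X]` on `V`. -/
def actZX (D : RootData Λ W) (l : ℕ) (g : Λ →₀ ℤ) (v : V Λ) : V Λ :=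
  g.sum fun mu c => c • (D.opX l mu v)

/-- `N_λ = #{α ∈ R⁺ : ⟨λ + ρ, α^∨⟩ ∈ lℤ}`. -/
def Ncount (D : RootData Λ W) (l : ℕ) (lam : Λ) : ℕ :=
  (D.posRoots.filter (fun f => (l : ℤ) ∣ f (lam + D.ρ))).card

/-- The coefficient `(-1)^{l(w0)} (t^{-1/2})^{l(w0) - N_λ}` appearing in the bar
involution, where `l(w0) = Card R⁺`. -/
def barCoef (D : RootData Λ W) (l : ℕ) (lam : Λ) : K :=
  ((-1 : K) ^ D.posRoots.card) * T ((D.Ncount l lam : ℤ) - (D.posRoots.card : ℤ))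

/-- The bar involution of `V`:
`bar(c|λ⟩) = c̄ (-1)^{l(w0)} (t^{-1/2})^{l(w0)-N_λ} |w0 ∘ λ⟩`. -/
def barV (D : RootData Λ W) (l : ℕ) (v : V Λ) : V Λ :=
  v.sum fun lam c => (conjK c * D.barCoef l lam) • ket (D.dot D.w0 lam)

/-- `V⁺`: the `ℤ[t^{1/2}]`-span of the `|μ⟩` inside `V`, i.e. the elements all
of whose coefficients are polynomials in `t^{1/2}`. -/
def inVplus {Λ : Type} (b : V Λ) : Prop :=
  ∀ (mu : Λ) (m : ℤ), m < 0 → (b mu).coeff m = 0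

/-- Membership in `I + t^{1/2} V⁺`. -/
def inIplus (D : RootData Λ W) (l : ℕ) (x : V Λ) : Prop :=
  ∃ a ∈ D.Idl l, ∃ b : V Λ, inVplus b ∧ x = a + tHalf • b

/-- The Weyl numerator `∑_{w ∈ W₀} det(w) X^{w ν}` in `K[X]`. -/
def weylNumer (D : RootData Λ W) (nu : Λ) : AddMonoidAlgebra K Λ :=
  ∑ w : W, ((D.det w : ℤˣ) : ℤ) • AddMonoidAlgebra.single (Multiplicative.toAdd (D.σ w) nu) (1 : K)

/-- `g` is the Weyl character `s_ν ∈ ℤ[X]^{W₀} ⊆ K[X]`: it has integer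
coefficients, is `W₀`-invariant, and satisfies the Weyl character formula
`(∑_w det(w) X^{wρ}) · s_ν = ∑_w det(w) X^{w(ν+ρ)}`. -/
def IsWeylChar (D : RootData Λ W) (nu : Λ) (g : AddMonoidAlgebra K Λ) : Prop :=
  (∀ mu : Λ, ∃ z : ℤ, g.coeff mu = (z : K)) ∧
  (∀ (w : W) (mu : Λ), g.coeff (Multiplicative.toAdd (D.σ w) mu) = g.coeff mu) ∧
  D.weylNumer D.ρ * g = D.weylNumer (nu + D.ρ)

end RootData

end

namespace RootData

variable {Λ W : Type} [AddCommGroup Λ] [Group W] [Fintype W] (D : RootData Λ W)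

theorem pair_reflect (i : Fin D.n) (x : Λ) :
    D.pair i (Multiplicative.toAdd (D.σ (D.s i)) x) = -D.pair i x := by
  rw [D.reflect, map_sub, map_zsmul, D.pair_alpha_self, smul_eq_mul]
  ring

theorem dot_s (i : Fin D.n) (lam : Λ) :
    D.dot (D.s i) lam = lam - D.pair i (lam + D.ρ) • D.α i := by
  rw [dot, D.reflect]
  abel

theorem pair_dot_s_add_rho (i : Fin D.n) (lam : Λ) :
    D.pair i (D.dot (D.s i) lam + D.ρ) = -D.pair i (lam + D.ρ) := by
  rw [dot, sub_add_cancel, pair_reflect]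

theorem pair_nonneg_of_dominant {lam : Λ} (h : D.dominant lam) (i : Fin D.n) :
    0 ≤ D.pair i lam := by
  have := h i
  rw [map_add, D.pair_rho] at this
  omega

end RootData

theorem statement6_general {Λ W : Type} [AddCommGroup Λ] [Group W] [Fintype W]
    (D : RootData Λ W) (l : ℕ) (i : Fin D.n) (lam0 nu : Λ)
    (h0 : D.restricted l lam0) :
    D.pair i (D.dot (D.s i) (lam0 + l • nu) + D.ρ) =
        (l : ℤ) * (-(D.pair i (nu + D.ρ))) + ((l : ℤ) - 1 - D.pair i lam0) ∧
    D.lamOne l i (D.dot (D.s i) (lam0 + l • nu)) = lam0 + l • D.dot (D.s i) nu := by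
  have hpair : D.pair i (D.dot (D.s i) (lam0 + l • nu) + D.ρ) =
      (l : ℤ) * (-(D.pair i (nu + D.ρ))) + ((l : ℤ) - 1 - D.pair i lam0) := by
    rw [D.pair_dot_s_add_rho]
    simp only [map_add, map_nsmul, D.pair_rho, nsmul_eq_mul]
    ring
  refine ⟨hpair, ?_⟩
  have h_lo := D.pair_nonneg_of_dominant h0.1 i
  have h_hi := h0.2 i
  have hrem : D.pair i (D.dot (D.s i) (lam0 + l • nu) + D.ρ) % (l : ℤ) =
      (l : ℤ) - 1 - D.pair i lam0 := by
    rw [hpair, add_comm, Int.add_mul_emod_self_left, Int.emod_eq_of_lt (by omega) (by omega)]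
  rw [RootData.lamOne, hrem, D.dot_s, D.dot_s]
  simp only [map_add, map_nsmul, D.pair_rho, nsmul_eq_mul]
  module

/-- key computation in step (b) of the proof of Theorem 1.2:
for `λ₀ ∈ Π_l`, `⟨ν+ρ, α_i^∨⟩ ≤ 0` and `λ = s_i∘(λ₀ + lν)`, one has
`⟨λ+ρ, α_i^∨⟩ = l(-⟨ν+ρ, α_i^∨⟩) + (l - 1 - ⟨λ₀, α_i^∨⟩)` and
`λ^{(1)} = λ₀ + l(s_i∘ν)` (with `λ^{(1)}` relative to `i`). -/
theorem statement6 {Λ W : Type} [AddCommGroup Λ] [Group W] [Fintype W]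
    (D : RootData Λ W) (l : ℕ) (hl : 0 < l) (i : Fin D.n) (lam0 nu : Λ)
    (h0 : D.restricted l lam0) (hnu : D.pair i (nu + D.ρ) ≤ 0) :
    D.pair i (D.dot (D.s i) (lam0 + l • nu) + D.ρ) =
        (l : ℤ) * (-(D.pair i (nu + D.ρ))) + ((l : ℤ) - 1 - D.pair i lam0) ∧
    D.lamOne l i (D.dot (D.s i) (lam0 + l • nu)) = lam0 + l • D.dot (D.s i) nu :=
  statement6_general D l i lam0 nu h0
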